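/- In the setting of the dgl (L₁, D) built from minimal Quillen models of 2-cones, for all A, B ∈ 𝕃(V₀) and T ∈ 𝕃(W₀): D(σ_A σ_B (T)) = (−1)^{|A|+1} σ_{[A,B]}(T) + (−1)^{|A|+|B||T|} [σ_A(T), B] + [A, σ_B(T)]. -/

import Mathlib

universe u

/-- A graded Lie algebra over `ℚ`: a `ℤ`-graded vector space with a bilinear bracket
satisfying graded antisymmetry and the graded Jacobi identity on homogeneous elements. -/
structure GLA (Lc : Type u) [AddCommGroup Lc] [Module ℚ Lc] where
  grade : ℤ → Submodule ℚ Lc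
  internal : DirectSum.IsInternal grade
  br : Lc →ₗ[ℚ] Lc →ₗ[ℚ] Lc
  br_mem : ∀ {i j : ℤ} {x y : Lc}, x ∈ grade i → y ∈ grade j → br x y ∈ grade (i + j)
  antisymm : ∀ {i j : ℤ} {x y : Lc}, x ∈ grade i → y ∈ grade j →
      br x y = -((-1 : ℚ) ^ (i * j) • br y x)
  jacobi : ∀ {i j : ℤ} {x y : Lc} (z : Lc), x ∈ grade i → y ∈ grade j →
      br x (br y z) = br (br x y) z + (-1 : ℚ) ^ (i * j) • br y (br x z)

namespace GLA

variable {Lc : Type u} [AddCommGroup Lc] [Module ℚ Lc]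

/-- The Lie subalgebra (as a submodule closed under the bracket) generated by
a graded family of subspaces. -/
def lieSub (G : GLA Lc) (p : ℤ → Submodule ℚ Lc) : Submodule ℚ Lc :=
  sInf {q | (∀ i, p i ≤ q) ∧ ∀ x ∈ q, ∀ y ∈ q, G.br x y ∈ q}

/-- The submodule of decomposable elements of `L`: the span of all brackets. -/
def dec (G : GLA Lc) : Submodule ℚ Lc :=
  Submodule.span ℚ {x : Lc | ∃ a b : Lc, x = G.br a b}

/-- A graded Lie algebra is reduced if it vanishes in degrees `≤ 0`. -/
def Reduced (G : GLA Lc) : Prop := ∀ i : ℤ, i ≤ 0 → G.grade i = ⊥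

end GLA


section Signs

lemma E_mul_E (m n : ℤ) : (-1:ℚ)^m * (-1:ℚ)^n = (-1:ℚ)^(m+n) :=
  (zpow_add₀ (by norm_num) m n).symm

lemma E_eq_E {m n : ℤ} (k : ℤ) (h : m = n + 2*k) : (-1:ℚ)^m = (-1:ℚ)^n := by
  subst h
  rw [← E_mul_E, show (2*k) = k + k by ring, ← E_mul_E]
  have h1 : (-1:ℚ)^k * (-1:ℚ)^k = 1 := by rw [E_mul_E]; exact Even.neg_one_zpow ⟨k, rfl⟩
  rw [h1, mul_one]

lemma E_eq_negE {m n : ℤ} (k : ℤ) (h : m = n + (2*k+1)) : (-1:ℚ)^m = -(-1:ℚ)^n := by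
  rw [E_eq_E k (show m = (n+1) + 2*k by omega), ← E_mul_E]
  norm_num

lemma E_smul_smul {M : Type u} [AddCommGroup M] [Module ℚ M] (n : ℤ) (x : M) :
    (-1 : ℚ) ^ n • (-1 : ℚ) ^ n • x = x := by
  rw [smul_smul, E_mul_E]
  rw [Even.neg_one_zpow ⟨n, rfl⟩, one_smul]

end Signs

namespace GLA

variable {Lc : Type u} [AddCommGroup Lc] [Module ℚ Lc]

/-- doc -/
def lieSub' (G : GLA Lc) (p : ℤ → Submodule ℚ Lc) : Submodule ℚ Lc :=
  sInf {q | (∀ i, p i ≤ q) ∧ ∀ x ∈ q, ∀ y ∈ q, G.br x y ∈ q}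

example (G : GLA Lc) (p) : G.lieSub p = G.lieSub' p := rfl

/-- Iterated brackets of homogeneous generators. -/
inductive Brkt (G : GLA Lc) (p : ℤ → Submodule ℚ Lc) : ℤ → Lc → Prop
  | gen {i : ℤ} {x : Lc} : x ∈ p i → Brkt G p i x
  | br {i j : ℤ} {x y : Lc} : Brkt G p i x → Brkt G p j y → Brkt G p (i + j) (G.br x y)

variable (G : GLA Lc) {p q : ℤ → Submodule ℚ Lc}

lemma le_lieSub (i : ℤ) : p i ≤ G.lieSub p := by
  intro x hx
  rw [lieSub, Submodule.mem_sInf]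
  exact fun q hq => hq.1 i hx

lemma lieSub_br {x y : Lc} (hx : x ∈ G.lieSub p) (hy : y ∈ G.lieSub p) :
    G.br x y ∈ G.lieSub p := by
  rw [lieSub, Submodule.mem_sInf] at *
  exact fun q hq => hq.2 x (hx q hq) y (hy q hq)

lemma lieSub_mono (h : ∀ i, p i ≤ q i) : G.lieSub p ≤ G.lieSub q := by
  intro x hx
  rw [lieSub, Submodule.mem_sInf] at *
  exact fun r hr => hx r ⟨fun i => (h i).trans (hr.1 i), hr.2⟩

variable {G}

lemma Brkt.mem_lieSub {i : ℤ} {x : Lc} (h : G.Brkt p i x) : x ∈ G.lieSub p := by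
  induction h with
  | gen hx => exact G.le_lieSub _ hx
  | br _ _ hx hy => exact G.lieSub_br hx hy

lemma Brkt.mem_grade (hp : ∀ i, p i ≤ G.grade i) {i : ℤ} {x : Lc} (h : G.Brkt p i x) :
    x ∈ G.grade i := by
  induction h with
  | gen hx => exact hp _ hx
  | br _ _ hx hy => exact G.br_mem hx hy

variable (G)

lemma lieSub_le_span (p : ℤ → Submodule ℚ Lc) :
    G.lieSub p ≤ Submodule.span ℚ {x : Lc | ∃ i, G.Brkt p i x} := by
  apply sInf_le
  constructor
  · exact fun i x hx => Submodule.subset_span ⟨i, Brkt.gen hx⟩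
  · intro x hx y hy
    induction hx using Submodule.span_induction with
    | mem x hx =>
      induction hy using Submodule.span_induction with
      | mem y hy =>
        obtain ⟨i, hi⟩ := hx; obtain ⟨j, hj⟩ := hy
        exact Submodule.subset_span ⟨i + j, hi.br hj⟩
      | zero => simp
      | add y z _ _ hy hz => rw [map_add]; exact Submodule.add_mem _ hy hz
      | smul c y _ hy => rw [map_smul]; exact Submodule.smul_mem _ _ hy
    | zero => simp
    | add x z _ _ hx hz => rw [map_add, LinearMap.add_apply]; exact Submodule.add_mem _ hx hz
    | smul c x _ hx => rw [map_smul, LinearMap.smul_apply]; exact Submodule.smul_mem _ _ hx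

lemma homog (p : ℤ → Submodule ℚ Lc) (hp : ∀ i, p i ≤ G.grade i) {a : ℤ} {x : Lc}
    (hx : x ∈ G.lieSub p) (hxa : x ∈ G.grade a) :
    x ∈ Submodule.span ℚ {y : Lc | G.Brkt p a y} := by
  classical
  set M : ℤ → Submodule ℚ Lc := fun i => Submodule.span ℚ {y : Lc | G.Brkt p i y} with hM
  have hML : ∀ i, M i ≤ G.grade i := fun i =>
    Submodule.span_le.2 fun y hy => Brkt.mem_grade hp hy
  have hx' : x ∈ ⨆ i, M i := by
    have h1 := G.lieSub_le_span p hx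
    have h2 : {y : Lc | ∃ i, G.Brkt p i y} = ⋃ i, {y : Lc | G.Brkt p i y} := by
      ext y; simp [Set.mem_iUnion]
    rw [h2, Submodule.span_iUnion] at h1
    exact h1
  set e := LinearEquiv.ofBijective (DirectSum.coeLinearMap (fun i => G.grade i)) G.internal
    with he
  set π : Lc →ₗ[ℚ] Lc :=
    (G.grade a).subtype ∘ₗ (DirectSum.component ℚ ℤ (fun i => ↥(G.grade i)) a) ∘ₗ
      (e.symm : Lc →ₗ[ℚ] _) with hπdef
  have hπ_same : ∀ z : Lc, (hz : z ∈ G.grade a) → π z = z := by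
    intro z hz
    have := G.internal.ofBijective_coeLinearMap_of_mem (i := a) hz
    exact congrArg Subtype.val this
  have hπ_ne : ∀ (i : ℤ), i ≠ a → ∀ z : Lc, z ∈ G.grade i → π z = 0 := by
    intro i hi z hz
    have := G.internal.ofBijective_coeLinearMap_of_mem_ne (i := i) (j := a) hi hz
    exact congrArg Subtype.val this
  have key : π x ∈ M a := by
    refine Submodule.iSup_induction (motive := fun y => π y ∈ M a) M hx' ?_ (by simp) ?_
    · intro i z hz
      by_cases hia : i = a
      · subst hia; rw [hπ_same z (hML i hz)]; exact hz
      · rw [hπ_ne i hia z (hML i hz)]; simp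
    · intro y z hy hz; rw [map_add]; exact Submodule.add_mem _ hy hz
  rw [hπ_same x hxa] at key
  exact key

end GLA



/-- formula (5) of Lemma 3.7.  In the dgl `(L₁, D)` built from minimal
Quillen models of 2-cones, for all homogeneous `A, B ∈ 𝕃(V₀)` and homogeneous `T ∈ 𝕃(W₀)`,
`D(σ_A σ_B (T)) = (-1)^{|A|+1} σ_{[A,B]}(T) + (-1)^{|A|+|B||T|}[σ_A(T), B] + [A, σ_B(T)]`. -/
theorem statement9
    {Lc : Type u} [AddCommGroup Lc] [Module ℚ Lc] (G : GLA Lc)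
    (V0 V1 W0 W1 Sp : ℤ → Submodule ℚ Lc)
    -- the ambient free Lie algebra is reduced
    (hred : G.Reduced)
    (hV0 : ∀ i, V0 i ≤ G.grade i) (hV1 : ∀ i, V1 i ≤ G.grade i)
    (hW0 : ∀ i, W0 i ≤ G.grade i) (hW1 : ∀ i, W1 i ≤ G.grade i)
    (hSp : ∀ i, Sp i ≤ G.grade i)
    -- the suspension `s(v ⊗ w)`, bilinear, of degree `|v|+|w|+1`; in `L₁` only
    -- `s(V₀⊗W₀) ⊕ s(V₁⊗W₀) ⊕ s(V₀⊗W₁)` is present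
    (sus : Lc →ₗ[ℚ] Lc →ₗ[ℚ] Lc)
    (hsus00 : ∀ {i j : ℤ} {v w : Lc}, v ∈ V0 i → w ∈ W0 j → sus v w ∈ Sp (i + j + 1))
    (hsus10 : ∀ {i j : ℤ} {v w : Lc}, v ∈ V1 i → w ∈ W0 j → sus v w ∈ Sp (i + j + 1))
    (hsus01 : ∀ {i j : ℤ} {v w : Lc}, v ∈ V0 i → w ∈ W1 j → sus v w ∈ Sp (i + j + 1))
    -- `L₁` is generated by `V ⊕ W ⊕ s(V₀⊗W₀) ⊕ s(V₁⊗W₀) ⊕ s(V₀⊗W₁)`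
    (hgen : G.lieSub (fun i => V0 i ⊔ V1 i ⊔ W0 i ⊔ W1 i ⊔ Sp i) = ⊤)
    -- the derivations `σ_A` for homogeneous `A ∈ 𝕃(V ⊕ W)`
    (sg : ℤ → Lc → (Lc →ₗ[ℚ] Lc))
    (hsg_grade : ∀ {a : ℤ} {A : Lc}, A ∈ G.lieSub (fun i => V0 i ⊔ V1 i ⊔ W0 i ⊔ W1 i) →
      A ∈ G.grade a → ∀ {n : ℤ} {x : Lc}, x ∈ G.grade n → sg a A x ∈ G.grade (n + a + 1))
    (hsg_der : ∀ {a : ℤ} {A : Lc}, A ∈ G.lieSub (fun i => V0 i ⊔ V1 i ⊔ W0 i ⊔ W1 i) →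
      A ∈ G.grade a → ∀ {n : ℤ} (x y : Lc), x ∈ G.grade n →
      sg a A (G.br x y) = G.br (sg a A x) y + (-1 : ℚ) ^ ((a + 1) * n) • G.br x (sg a A y))
    (hsg_vw : ∀ {i j : ℤ} {v w : Lc}, v ∈ V0 i ⊔ V1 i → w ∈ W0 j → sg i v w = sus v w)
    (hsg_vw' : ∀ {i j : ℤ} {v w : Lc}, v ∈ V0 i → w ∈ W1 j → sg i v w = sus v w)
    (hsg_wv : ∀ {i j : ℤ} {v w : Lc}, v ∈ V0 i ⊔ V1 i → w ∈ W0 j →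
      sg j w v = (-1 : ℚ) ^ (i * j) • sus v w)
    (hsg_wv' : ∀ {i j : ℤ} {v w : Lc}, v ∈ V0 i → w ∈ W1 j →
      sg j w v = (-1 : ℚ) ^ (i * j) • sus v w)
    (hsg_vv : ∀ {i i' : ℤ} {v v' : Lc}, v ∈ V0 i ⊔ V1 i → v' ∈ V0 i' ⊔ V1 i' →
      sg i v v' = 0)
    (hsg_ww : ∀ {j j' : ℤ} {w w' : Lc}, w ∈ W0 j ⊔ W1 j → w' ∈ W0 j' ⊔ W1 j' →
      sg j w w' = 0)
    (hsg_vS : ∀ {i k : ℤ} {v x : Lc}, v ∈ V0 i ⊔ V1 i → x ∈ Sp k → sg i v x = 0)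
    (hsg_wS : ∀ {j k : ℤ} {w x : Lc}, w ∈ W0 j ⊔ W1 j → x ∈ Sp k → sg j w x = 0)
    (hsg_Av : ∀ {a : ℤ} {A : Lc}, A ∈ G.lieSub (fun i => V0 i ⊔ V1 i ⊔ W0 i ⊔ W1 i) →
      A ∈ G.grade a → ∀ {i : ℤ} {v : Lc}, v ∈ V0 i ⊔ V1 i →
      sg a A v = (-1 : ℚ) ^ (i * a) • sg i v A)
    (hsg_Aw : ∀ {a : ℤ} {A : Lc}, A ∈ G.lieSub (fun i => V0 i ⊔ V1 i ⊔ W0 i ⊔ W1 i) →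
      A ∈ G.grade a → ∀ {j : ℤ} {w : Lc}, w ∈ W0 j ⊔ W1 j →
      sg a A w = (-1 : ℚ) ^ (j * a) • sg j w A)
    (hsg_AS : ∀ {a : ℤ} {A : Lc}, A ∈ G.lieSub (fun i => V0 i ⊔ V1 i ⊔ W0 i ⊔ W1 i) →
      A ∈ G.grade a → ∀ {k : ℤ} {x : Lc}, x ∈ Sp k → sg a A x = 0)
    -- the degree `-1` derivation `D` of `L₁`
    (D : Lc →ₗ[ℚ] Lc)
    (hD_grade : ∀ {i : ℤ} {x : Lc}, x ∈ G.grade i → D x ∈ G.grade (i - 1))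
    (hD_der : ∀ {i : ℤ} (x y : Lc), x ∈ G.grade i →
      D (G.br x y) = G.br (D x) y + (-1 : ℚ) ^ ((-1 : ℤ) * i) • G.br x (D y))
    -- `D = ∂_V` on `V`, `D = ∂_W` on `W`, with `∂(V₀) = ∂(W₀) = 0`,
    -- `∂(V₁) ⊆ 𝕃(V₀)` and `∂(W₁) ⊆ 𝕃(W₀)`
    (hD_V0 : ∀ {i : ℤ} {v : Lc}, v ∈ V0 i → D v = 0)
    (hD_W0 : ∀ {j : ℤ} {w : Lc}, w ∈ W0 j → D w = 0)
    (hD_V1 : ∀ {i : ℤ} {v : Lc}, v ∈ V1 i → D v ∈ G.lieSub V0)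
    (hD_W1 : ∀ {j : ℤ} {w : Lc}, w ∈ W1 j → D w ∈ G.lieSub W0)
    -- minimality of the two Quillen models
    (hD_V1dec : ∀ {i : ℤ} {v : Lc}, v ∈ V1 i → D v ∈ G.dec)
    (hD_W1dec : ∀ {j : ℤ} {w : Lc}, w ∈ W1 j → D w ∈ G.dec)
    -- the value of `D` on the suspension generators
    (hD_sus00 : ∀ {i j : ℤ} {v w : Lc}, v ∈ V0 i → w ∈ W0 j → D (sus v w) = G.br v w)
    (hD_sus10 : ∀ {i j : ℤ} {v w : Lc}, v ∈ V1 i → w ∈ W0 j →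
      D (sus v w) = G.br v w - (-1 : ℚ) ^ ((i + 1) * j) • sg j w (D v))
    (hD_sus01 : ∀ {i j : ℤ} {v w : Lc}, v ∈ V0 i → w ∈ W1 j →
      D (sus v w) = G.br v w - (-1 : ℚ) ^ i • sg i v (D w))
    -- `(L₁, D)` is a dgl
    (hDD : ∀ x : Lc, D (D x) = 0)
 :
    ∀ {a : ℤ} {A : Lc}, A ∈ G.lieSub V0 → A ∈ G.grade a →
    ∀ {b : ℤ} {B : Lc}, B ∈ G.lieSub V0 → B ∈ G.grade b →
    ∀ {t : ℤ} {T : Lc}, T ∈ G.lieSub W0 → T ∈ G.grade t →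
      D (sg a A (sg b B T))
        = (-1 : ℚ) ^ (a + 1) • sg (a + b) (G.br A B) T
          + (-1 : ℚ) ^ (a + b * t) • G.br (sg a A T) B
          + G.br A (sg b B T) := by
  intro a A hAV hAa b B hBV hBb t T hTW hTt
  classical
  have mV0 : ∀ {i : ℤ} {v : Lc}, v ∈ V0 i → v ∈ V0 i ⊔ V1 i ⊔ W0 i ⊔ W1 i := fun h =>
    Submodule.mem_sup_left (Submodule.mem_sup_left (Submodule.mem_sup_left h))
  have mW0 : ∀ {i : ℤ} {w : Lc}, w ∈ W0 i → w ∈ V0 i ⊔ V1 i ⊔ W0 i ⊔ W1 i := fun h =>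
    Submodule.mem_sup_left (Submodule.mem_sup_right h)
  have hLV4 : G.lieSub V0 ≤ G.lieSub (fun i => V0 i ⊔ V1 i ⊔ W0 i ⊔ W1 i) :=
    G.lieSub_mono (fun i x hx => mV0 hx)
  have hLW4 : G.lieSub W0 ≤ G.lieSub (fun i => V0 i ⊔ V1 i ⊔ W0 i ⊔ W1 i) :=
    G.lieSub_mono (fun i x hx => mW0 hx)
  have hv4 : ∀ {i : ℤ} {v : Lc}, v ∈ V0 i →
      v ∈ G.lieSub (fun i => V0 i ⊔ V1 i ⊔ W0 i ⊔ W1 i) := fun h => G.le_lieSub _ (mV0 h)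
  have hw4 : ∀ {j : ℤ} {w : Lc}, w ∈ W0 j →
      w ∈ G.lieSub (fun i => V0 i ⊔ V1 i ⊔ W0 i ⊔ W1 i) := fun h => G.le_lieSub _ (mW0 h)
  have hp5g : ∀ i, (V0 i ⊔ V1 i ⊔ W0 i ⊔ W1 i ⊔ Sp i) ≤ G.grade i := fun i =>
    sup_le (sup_le (sup_le (sup_le (hV0 i) (hV1 i)) (hW0 i)) (hW1 i)) (hSp i)
  have hDV : ∀ x ∈ G.lieSub V0, D x = 0 := by
    have hDbr : ∀ (i : ℤ) (x : Lc), G.Brkt V0 i x → D x = 0 := by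
      intro i x h
      induction h with
      | gen hx => exact hD_V0 hx
      | @br i j x y hx hy ihx ihy => rw [hD_der x y (hx.mem_grade hV0), ihx, ihy]; simp
    intro x hx
    refine Submodule.span_induction ?_ ?_ ?_ ?_ (G.lieSub_le_span V0 hx)
    · rintro y ⟨i, hi⟩; exact hDbr i y hi
    · simp
    · intro y z _ _ hy hz; rw [map_add, hy, hz, add_zero]
    · intro c y _ hy; rw [map_smul, hy, smul_zero]
  have hDW : ∀ x ∈ G.lieSub W0, D x = 0 := by
    have hDbr : ∀ (i : ℤ) (x : Lc), G.Brkt W0 i x → D x = 0 := by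
      intro i x h
      induction h with
      | gen hx => exact hD_W0 hx
      | @br i j x y hx hy ihx ihy => rw [hD_der x y (hx.mem_grade hW0), ihx, ihy]; simp
    intro x hx
    refine Submodule.span_induction ?_ ?_ ?_ ?_ (G.lieSub_le_span W0 hx)
    · rintro y ⟨i, hi⟩; exact hDbr i y hi
    · simp
    · intro y z _ _ hy hz; rw [map_add, hy, hz, add_zero]
    · intro c y _ hy; rw [map_smul, hy, smul_zero]
  have hsgv0 : ∀ {i : ℤ} {v : Lc}, v ∈ V0 i → ∀ x ∈ G.lieSub V0, sg i v x = 0 := by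
    intro i v hv
    have hbr : ∀ (k : ℤ) (x : Lc), G.Brkt V0 k x → sg i v x = 0 := by
      intro k x h
      induction h with
      | gen hx => exact hsg_vv (Submodule.mem_sup_left hv) (Submodule.mem_sup_left hx)
      | @br k l x y hx hy ihx ihy =>
        rw [hsg_der (hv4 hv) (hV0 i hv) x y (hx.mem_grade hV0), ihx, ihy]; simp
    intro x hx
    refine Submodule.span_induction ?_ ?_ ?_ ?_ (G.lieSub_le_span V0 hx)
    · rintro y ⟨k, hk⟩; exact hbr k y hk
    · simp
    · intro y z _ _ hy hz; rw [map_add, hy, hz, add_zero]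
    · intro c y _ hy; rw [map_smul, hy, smul_zero]
  have hZ1 : ∀ {α : ℤ} {X : Lc}, X ∈ G.lieSub V0 → X ∈ G.grade α →
      ∀ x ∈ G.lieSub V0, sg α X x = 0 := by
    intro α X hXL hXg
    have hbr : ∀ (k : ℤ) (x : Lc), G.Brkt V0 k x → sg α X x = 0 := by
      intro k x h
      induction h with
      | gen hx =>
        rw [hsg_Av (hLV4 hXL) hXg (Submodule.mem_sup_left hx), hsgv0 hx X hXL, smul_zero]
      | @br k l x y hx hy ihx ihy =>
        rw [hsg_der (hLV4 hXL) hXg x y (hx.mem_grade hV0), ihx, ihy]; simp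
    intro x hx
    refine Submodule.span_induction ?_ ?_ ?_ ?_ (G.lieSub_le_span V0 hx)
    · rintro y ⟨k, hk⟩; exact hbr k y hk
    · simp
    · intro y z _ _ hy hz; rw [map_add, hy, hz, add_zero]
    · intro c y _ hy; rw [map_smul, hy, smul_zero]
  have hadd : ∀ (α : ℤ) (X Y : Lc), X ∈ G.lieSub (fun i => V0 i ⊔ V1 i ⊔ W0 i ⊔ W1 i) →
      X ∈ G.grade α → Y ∈ G.lieSub (fun i => V0 i ⊔ V1 i ⊔ W0 i ⊔ W1 i) → Y ∈ G.grade α →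
      ∀ x, sg α (X + Y) x = sg α X x + sg α Y x := by
    intro α X Y hXL hXg hYL hYg
    have hXYL : X + Y ∈ G.lieSub (fun i => V0 i ⊔ V1 i ⊔ W0 i ⊔ W1 i) :=
      Submodule.add_mem _ hXL hYL
    have hXYg : X + Y ∈ G.grade α := Submodule.add_mem _ hXg hYg
    have hbr : ∀ (k : ℤ) (z : Lc), G.Brkt (fun i => V0 i ⊔ V1 i ⊔ W0 i ⊔ W1 i ⊔ Sp i) k z →
        sg α (X + Y) z = sg α X z + sg α Y z := by
      intro k z h
      induction h with
      | @gen k z hz =>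
        obtain ⟨y1, hy1, s, hs, rfl⟩ := Submodule.mem_sup.1 hz
        obtain ⟨y2, hy2, w1, hw1, rfl⟩ := Submodule.mem_sup.1 hy1
        obtain ⟨u, hu, w0, hw0, rfl⟩ := Submodule.mem_sup.1 hy2
        simp only [map_add]
        rw [hsg_Av hXYL hXYg hu, hsg_Av hXL hXg hu, hsg_Av hYL hYg hu,
          hsg_Aw hXYL hXYg (Submodule.mem_sup_left hw0),
          hsg_Aw hXL hXg (Submodule.mem_sup_left hw0),
          hsg_Aw hYL hYg (Submodule.mem_sup_left hw0),
          hsg_Aw hXYL hXYg (Submodule.mem_sup_right hw1),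
          hsg_Aw hXL hXg (Submodule.mem_sup_right hw1),
          hsg_Aw hYL hYg (Submodule.mem_sup_right hw1),
          hsg_AS hXYL hXYg hs, hsg_AS hXL hXg hs, hsg_AS hYL hYg hs]
        simp only [map_add, smul_add]
        abel
      | @br k l z1 z2 hz1 hz2 ih1 ih2 =>
        have hz1g := hz1.mem_grade hp5g
        rw [hsg_der hXYL hXYg z1 z2 hz1g, hsg_der hXL hXg z1 z2 hz1g,
          hsg_der hYL hYg z1 z2 hz1g, ih1, ih2]
        simp only [map_add, LinearMap.add_apply, smul_add]
        abel
    intro x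
    have hxT : x ∈ G.lieSub (fun i => V0 i ⊔ V1 i ⊔ W0 i ⊔ W1 i ⊔ Sp i) := by
      rw [hgen]; exact Submodule.mem_top
    refine Submodule.span_induction ?_ ?_ ?_ ?_ (G.lieSub_le_span _ hxT)
    · rintro y ⟨k, hk⟩; exact hbr k y hk
    · simp
    · intro y z _ _ hy hz; simp only [map_add]; rw [hy, hz]; abel
    · intro c y _ hy; simp only [map_smul]; rw [hy]; simp [smul_add]
  have hsmul : ∀ (α : ℤ) (X : Lc), X ∈ G.lieSub (fun i => V0 i ⊔ V1 i ⊔ W0 i ⊔ W1 i) →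
      X ∈ G.grade α → ∀ (c : ℚ) (x : Lc), sg α (c • X) x = c • sg α X x := by
    intro α X hXL hXg c
    have hcXL : c • X ∈ G.lieSub (fun i => V0 i ⊔ V1 i ⊔ W0 i ⊔ W1 i) :=
      Submodule.smul_mem _ _ hXL
    have hcXg : c • X ∈ G.grade α := Submodule.smul_mem _ _ hXg
    have hbr : ∀ (k : ℤ) (z : Lc), G.Brkt (fun i => V0 i ⊔ V1 i ⊔ W0 i ⊔ W1 i ⊔ Sp i) k z →
        sg α (c • X) z = c • sg α X z := by
      intro k z h
      induction h with
      | @gen k z hz =>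
        obtain ⟨y1, hy1, s, hs, rfl⟩ := Submodule.mem_sup.1 hz
        obtain ⟨y2, hy2, w1, hw1, rfl⟩ := Submodule.mem_sup.1 hy1
        obtain ⟨u, hu, w0, hw0, rfl⟩ := Submodule.mem_sup.1 hy2
        simp only [map_add]
        rw [hsg_Av hcXL hcXg hu, hsg_Av hXL hXg hu,
          hsg_Aw hcXL hcXg (Submodule.mem_sup_left hw0),
          hsg_Aw hXL hXg (Submodule.mem_sup_left hw0),
          hsg_Aw hcXL hcXg (Submodule.mem_sup_right hw1),
          hsg_Aw hXL hXg (Submodule.mem_sup_right hw1),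
          hsg_AS hcXL hcXg hs, hsg_AS hXL hXg hs]
        simp only [map_smul, smul_add, smul_zero, smul_comm c]
      | @br k l z1 z2 hz1 hz2 ih1 ih2 =>
        have hz1g := hz1.mem_grade hp5g
        rw [hsg_der hcXL hcXg z1 z2 hz1g, hsg_der hXL hXg z1 z2 hz1g, ih1, ih2]
        simp only [map_smul, LinearMap.smul_apply, smul_add, smul_comm c]
    intro x
    have hxT : x ∈ G.lieSub (fun i => V0 i ⊔ V1 i ⊔ W0 i ⊔ W1 i ⊔ Sp i) := by
      rw [hgen]; exact Submodule.mem_top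
    refine Submodule.span_induction ?_ ?_ ?_ ?_ (G.lieSub_le_span _ hxT)
    · rintro y ⟨k, hk⟩; exact hbr k y hk
    · simp
    · intro y z _ _ hy hz; simp only [map_add]; rw [hy, hz]; simp [smul_add]
    · intro c' y _ hy; simp only [map_smul]; rw [hy]; rw [smul_comm]
  have hzero : ∀ (α : ℤ) (x : Lc), sg α (0 : Lc) x = 0 := by
    intro α x
    have h := hsmul α 0 (Submodule.zero_mem _) (Submodule.zero_mem _) 0 x
    rw [smul_zero] at h
    rw [h, zero_smul]
  have flipw : ∀ {α : ℤ} {X : Lc}, X ∈ G.lieSub (fun i => V0 i ⊔ V1 i ⊔ W0 i ⊔ W1 i) →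
      X ∈ G.grade α → ∀ {j : ℤ} {w : Lc}, w ∈ W0 j →
      sg j w X = (-1 : ℚ) ^ (j * α) • sg α X w := by
    intro α X hXL hXg j w hw
    rw [hsg_Aw hXL hXg (Submodule.mem_sup_left hw), E_smul_smul]
  have hP1w : ∀ (α : ℤ) (X : Lc), G.Brkt V0 α X → ∀ {j : ℤ} {w : Lc}, w ∈ W0 j →
      D (sg α X w) = G.br X w := by
    intro α X h
    induction h with
    | @gen i v hv =>
      intro j w hw
      rw [hsg_vw (Submodule.mem_sup_left hv) hw, hD_sus00 hv hw]
    | @br a1 a2 X1 X2 h1 h2 ih1 ih2 =>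
      intro j w hw
      have hX1g := h1.mem_grade hV0
      have hX2g := h2.mem_grade hV0
      have hX1L := h1.mem_lieSub
      have hX2L := h2.mem_lieSub
      have hbrL : G.br X1 X2 ∈ G.lieSub V0 := G.lieSub_br hX1L hX2L
      rw [hsg_Aw (hLV4 hbrL) (G.br_mem hX1g hX2g) (Submodule.mem_sup_left hw), map_smul,
        hsg_der (hw4 hw) (hW0 j hw) X1 X2 hX1g,
        flipw (hLV4 hX1L) hX1g hw, flipw (hLV4 hX2L) hX2g hw]
      simp only [map_add, map_smul, LinearMap.smul_apply]
      rw [hD_der _ X2 (hsg_grade (hLV4 hX1L) hX1g (hW0 j hw)), hD_der X1 _ hX1g]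
      rw [ih1 hw, ih2 hw, hDV X1 hX1L, hDV X2 hX2L]
      have hjac := G.jacobi w hX1g hX2g
      have hjac' : G.br (G.br X1 X2) w
          = G.br X1 (G.br X2 w) - (-1 : ℚ) ^ (a1 * a2) • G.br X2 (G.br X1 w) := by
        rw [hjac]; abel
      have hanti : G.br (G.br X1 w) X2
          = -((-1 : ℚ) ^ ((a1 + j) * a2) • G.br X2 (G.br X1 w)) :=
        G.antisymm (G.br_mem hX1g (hW0 j hw)) hX2g
      rw [hjac', hanti]
      simp only [map_zero, LinearMap.zero_apply, smul_zero, add_zero, zero_add, smul_neg, smul_add,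
        smul_smul, E_mul_E]
      rw [E_eq_E (j * a1 + j * a2)
        (show j * (a1 + a2) + (j * a1 + (a1 + j) * a2) = a1 * a2 + 2 * (j * a1 + j * a2) by ring)]
      rw [E_eq_E (j * a1 + j * a2)
        (show j * (a1 + a2) + ((j + 1) * a1 + (j * a2 + -1 * a1)) = 0 + 2 * (j * a1 + j * a2)
          by ring)]
      rw [zpow_zero, one_smul]
      abel
  have hP1base : ∀ {α : ℤ} {X : Lc}, X ∈ G.lieSub V0 → X ∈ G.grade α →
      ∀ {j : ℤ} {w : Lc}, w ∈ W0 j → D (sg α X w) = G.br X w := by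
    intro α X hXL hXg j w hw
    refine Submodule.span_induction ?_ ?_ ?_ ?_ (G.homog V0 hV0 hXL hXg)
    · intro y hy; exact hP1w α y hy hw
    · rw [hzero, map_zero, map_zero, LinearMap.zero_apply]
    · intro y z hy hz ihy ihz
      have hyL := hLV4 (Submodule.span_le.2 (fun u hu => (hu : G.Brkt V0 α u).mem_lieSub) hy)
      have hzL := hLV4 (Submodule.span_le.2 (fun u hu => (hu : G.Brkt V0 α u).mem_lieSub) hz)
      have hyg : y ∈ G.grade α :=
        Submodule.span_le.2 (fun u hu => (hu : G.Brkt V0 α u).mem_grade hV0) hy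
      have hzg : z ∈ G.grade α :=
        Submodule.span_le.2 (fun u hu => (hu : G.Brkt V0 α u).mem_grade hV0) hz
      rw [hadd α y z hyL hyg hzL hzg, map_add, ihy, ihz, map_add, LinearMap.add_apply]
    · intro c y hy ihy
      have hyL := hLV4 (Submodule.span_le.2 (fun u hu => (hu : G.Brkt V0 α u).mem_lieSub) hy)
      have hyg : y ∈ G.grade α :=
        Submodule.span_le.2 (fun u hu => (hu : G.Brkt V0 α u).mem_grade hV0) hy
      rw [hsmul α y hyL hyg c w, map_smul, ihy, map_smul, LinearMap.smul_apply]
  have hP1 : ∀ {α : ℤ} {X : Lc}, X ∈ G.lieSub V0 → X ∈ G.grade α →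
      ∀ x ∈ G.lieSub W0, D (sg α X x) = G.br X x := by
    intro α X hXL hXg
    have hbr : ∀ (k : ℤ) (x : Lc), G.Brkt W0 k x → D (sg α X x) = G.br X x := by
      intro k x h
      induction h with
      | gen hx => exact hP1base hXL hXg hx
      | @br k l x y hx hy ihx ihy =>
        have hxg := hx.mem_grade hW0
        rw [hsg_der (hLV4 hXL) hXg x y hxg, map_add, map_smul,
          hD_der _ y (hsg_grade (hLV4 hXL) hXg hxg), hD_der x _ hxg,
          ihx, ihy, hDW x hx.mem_lieSub, hDW y hy.mem_lieSub,
          G.jacobi y hXg hxg]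
        simp only [map_zero, LinearMap.zero_apply, smul_zero, add_zero, zero_add, smul_add,
          smul_smul, E_mul_E]
        rw [E_eq_E 0 (show (α + 1) * k + -1 * k = α * k + 2 * 0 by ring)]
    intro x hx
    refine Submodule.span_induction ?_ ?_ ?_ ?_ (G.lieSub_le_span W0 hx)
    · rintro y ⟨k, hk⟩; exact hbr k y hk
    · simp
    · intro y z _ _ hy hz; rw [map_add, map_add, hy, hz, map_add]
    · intro c y _ hy; rw [map_smul, map_smul, hy, map_smul]
  have hZS : ∀ {α : ℤ} {X : Lc}, X ∈ G.lieSub V0 → X ∈ G.grade α →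
      ∀ {β : ℤ} {Y : Lc}, Y ∈ G.lieSub V0 → Y ∈ G.grade β →
      ∀ {j : ℤ} {w : Lc}, w ∈ W0 j → sg α X (sg β Y w) = 0 := by
    intro α X hXL hXg
    have hbr : ∀ (k : ℤ) (Y : Lc), G.Brkt V0 k Y → ∀ {j : ℤ} {w : Lc}, w ∈ W0 j →
        sg α X (sg k Y w) = 0 := by
      intro k Y h
      induction h with
      | @gen i v hv =>
        intro j w hw
        rw [hsg_vw (Submodule.mem_sup_left hv) hw,
          hsg_AS (hLV4 hXL) hXg (hsus00 hv hw)]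
      | @br b1 b2 Y1 Y2 h1 h2 ih1 ih2 =>
        intro j w hw
        have hY1g := h1.mem_grade hV0
        have hY2g := h2.mem_grade hV0
        have hY1L := h1.mem_lieSub
        have hY2L := h2.mem_lieSub
        have hbrL : G.br Y1 Y2 ∈ G.lieSub V0 := G.lieSub_br hY1L hY2L
        rw [hsg_Aw (hLV4 hbrL) (G.br_mem hY1g hY2g) (Submodule.mem_sup_left hw), map_smul,
          hsg_der (hw4 hw) (hW0 j hw) Y1 Y2 hY1g,
          flipw (hLV4 hY1L) hY1g hw, flipw (hLV4 hY2L) hY2g hw]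
        simp only [map_add, map_smul, LinearMap.smul_apply]
        rw [hsg_der (hLV4 hXL) hXg _ Y2 (hsg_grade (hLV4 hY1L) hY1g (hW0 j hw)),
          hsg_der (hLV4 hXL) hXg Y1 _ hY1g,
          ih1 hw, ih2 hw, hZ1 hXL hXg Y1 hY1L, hZ1 hXL hXg Y2 hY2L]
        simp
    intro β Y hYL hYg j w hw
    refine Submodule.span_induction ?_ ?_ ?_ ?_ (G.homog V0 hV0 hYL hYg)
    · intro y hy; exact hbr β y hy hw
    · rw [hzero, map_zero]
    · intro y z hy hz ihy ihz
      have hyL := hLV4 (Submodule.span_le.2 (fun u hu => (hu : G.Brkt V0 β u).mem_lieSub) hy)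
      have hzL := hLV4 (Submodule.span_le.2 (fun u hu => (hu : G.Brkt V0 β u).mem_lieSub) hz)
      have hyg : y ∈ G.grade β :=
        Submodule.span_le.2 (fun u hu => (hu : G.Brkt V0 β u).mem_grade hV0) hy
      have hzg : z ∈ G.grade β :=
        Submodule.span_le.2 (fun u hu => (hu : G.Brkt V0 β u).mem_grade hV0) hz
      rw [hadd β y z hyL hyg hzL hzg, map_add, ihy, ihz, add_zero]
    · intro c y hy ihy
      have hyL := hLV4 (Submodule.span_le.2 (fun u hu => (hu : G.Brkt V0 β u).mem_lieSub) hy)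
      have hyg : y ∈ G.grade β :=
        Submodule.span_le.2 (fun u hu => (hu : G.Brkt V0 β u).mem_grade hV0) hy
      rw [hsmul β y hyL hyg c w, map_smul, ihy, smul_zero]
  -- the main induction over T
  have hA4 := hLV4 hAV
  have hB4 := hLV4 hBV
  have hABL : G.br A B ∈ G.lieSub V0 := G.lieSub_br hAV hBV
  have hABg : G.br A B ∈ G.grade (a + b) := G.br_mem hAa hBb
  have key : ∀ (τ : ℤ) (T' : Lc), G.Brkt W0 τ T' →
      D (sg a A (sg b B T')) = (-1 : ℚ) ^ (a + 1) • sg (a + b) (G.br A B) T'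
        + (-1 : ℚ) ^ (a + b * τ) • G.br (sg a A T') B + G.br A (sg b B T') := by
    intro τ T' h
    induction h with
    | @gen j w hw =>
      rw [hZS hAV hAa hBV hBb hw, map_zero]
      rw [hsg_Aw (hLV4 hABL) hABg (Submodule.mem_sup_left hw),
        hsg_der (hw4 hw) (hW0 j hw) A B hAa,
        flipw hA4 hAa hw, flipw hB4 hBb hw]
      simp only [map_add, map_smul, LinearMap.smul_apply, smul_add, smul_smul, E_mul_E]
      rw [E_eq_negE (j * a) (show a + 1 + (j * (a + b) + j * a) = (a + b * j) + (2 * (j * a) + 1)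
            by ring),
        E_eq_negE (a + j * a + j * b) (show a + 1 + (j * (a + b) + ((j + 1) * a + j * b))
            = 0 + (2 * (a + j * a + j * b) + 1) by ring),
        zpow_zero]
      module
    | @br τ1 τ2 T1 T2 h1 h2 ih1 ih2 =>
      have hT1g := h1.mem_grade hW0
      have hT2g := h2.mem_grade hW0
      have hT1L := h1.mem_lieSub
      have hT2L := h2.mem_lieSub
      have hU1g : sg b B T1 ∈ G.grade (τ1 + b + 1) := hsg_grade hB4 hBb hT1g
      have hU2g : sg b B T2 ∈ G.grade (τ2 + b + 1) := hsg_grade hB4 hBb hT2g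
      have hR1g : sg a A T1 ∈ G.grade (τ1 + a + 1) := hsg_grade hA4 hAa hT1g
      have hR2g : sg a A T2 ∈ G.grade (τ2 + a + 1) := hsg_grade hA4 hAa hT2g
      have id1 : ∀ {m n k : ℤ} {x y z : Lc}, x ∈ G.grade m → y ∈ G.grade n → z ∈ G.grade k →
          G.br (G.br x y) z = (-1:ℚ)^(n*k) • G.br (G.br x z) y
            - (-1:ℚ)^(n*k) • G.br x (G.br z y) := by
        intro m n k x y z hx hy hz
        rw [G.antisymm (G.br_mem hx hy) hz, G.jacobi y hz hx, G.antisymm hz hx]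
        simp only [map_neg, map_smul, LinearMap.neg_apply, LinearMap.smul_apply, smul_add,
          smul_neg, smul_smul, neg_add, neg_neg, E_mul_E]
        rw [E_eq_E (k*m) (show (m+n)*k + k*m = n*k + 2*(k*m) by ring)]
        abel
      have id2 : ∀ {m n k : ℤ} {x y z : Lc}, x ∈ G.grade m → y ∈ G.grade n → z ∈ G.grade k →
          G.br (G.br x y) z = G.br x (G.br y z)
            - (-1:ℚ)^(k*(m+n)) • G.br (G.br z x) y := by
        intro m n k x y z hx hy hz
        have hj2 := G.jacobi z hx hy
        rw [show G.br (G.br x y) z = G.br x (G.br y z) - (-1:ℚ)^(m*n) • G.br y (G.br x z)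
          from by rw [hj2]; abel]
        rw [G.antisymm hy (G.br_mem hx hz), G.antisymm hx hz]
        simp only [map_neg, map_smul, LinearMap.neg_apply, LinearMap.smul_apply, smul_add,
          smul_neg, smul_smul, neg_neg, E_mul_E]
        rw [E_eq_E (n*m) (show m*n + (n*(m+k) + m*k) = k*(m+n) + 2*(n*m) by ring)]
      rw [hsg_der hB4 hBb T1 T2 hT1g, hsg_der hA4 hAa T1 T2 hT1g,
        hsg_der (hLV4 hABL) hABg T1 T2 hT1g]
      simp only [map_add, map_smul]
      rw [hsg_der hA4 hAa (sg b B T1) T2 hU1g, hsg_der hA4 hAa T1 (sg b B T2) hT1g]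
      simp only [map_add, map_smul]
      rw [hD_der (sg a A (sg b B T1)) T2 (hsg_grade hA4 hAa hU1g),
        hD_der (sg b B T1) (sg a A T2) hU1g,
        hD_der (sg a A T1) (sg b B T2) hR1g,
        hD_der T1 (sg a A (sg b B T2)) hT1g,
        ih1, ih2, hP1 hBV hBb T1 hT1L, hP1 hBV hBb T2 hT2L, hP1 hAV hAa T1 hT1L,
        hP1 hAV hAa T2 hT2L, hDW T1 hT1L, hDW T2 hT2L]
      simp only [map_add, map_smul, LinearMap.add_apply, LinearMap.smul_apply, map_zero,
        LinearMap.zero_apply, smul_zero, add_zero, zero_add, smul_add, smul_smul, E_mul_E]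
      rw [id1 hR1g hT2g hBb, id2 hT1g hR2g hBb,
        G.jacobi T2 hAa hU1g, G.jacobi (sg b B T2) hAa hT1g]
      simp only [smul_add, smul_sub, smul_smul, E_mul_E]
      match_scalars
      · ring
      · rw [mul_one, mul_one]; exact E_eq_E (-(b*τ2)) (by ring)
      · ring
      · rw [mul_one, mul_one]; exact E_eq_negE (-(b*τ1)-(b*τ2)) (by ring)
      · rw [mul_one, mul_one]; exact E_eq_E 0 (by ring)
      · ring
      · rw [mul_one, mul_one]; exact E_eq_negE (-a-b*τ2-1) (by ring)
      · rw [mul_one, mul_one]; exact E_eq_E 0 (by ring)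
      · rw [mul_one, mul_one]; exact E_eq_E 0 (by ring)
      · rw [mul_one, mul_one]; exact E_eq_E 0 (by ring)
  refine Submodule.span_induction ?_ ?_ ?_ ?_ (G.homog W0 hW0 hTW hTt)
  · intro y hy; exact key t y hy
  · simp
  · intro y z _ _ ihy ihz
    simp only [map_add, LinearMap.add_apply, smul_add]
    rw [ihy, ihz]
    abel
  · intro c y _ ihy
    simp only [map_smul, LinearMap.smul_apply]
    rw [ihy]
    module
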